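/- arXiv:1806.10262 — 4 statements merged into one kernel-verified Lean document; each statement's English description precedes it below -/
import Mathlib

section
/- For every real number β with 1 < β < 2, the series ∑_{k=0}^{∞} ω_k^{(β)} converges and its sum equals 0. -/
/-! Since `g_k^{(β)} = (-1)^k (β choose k)`, Pascal's rule `g_{n+1}^{(β)} = g_{n+1}^{(β-1)} - g_n^{(β-1)}`
makes the partial sums telescope: `∑_{k ≤ n} g_k^{(β)} = g_n^{(β-1)}`. For `0 ≤ α ≤ 1` the
recursion gives `|g_{n+1}^{(α)}| ≤ α / (n+1)`, so these partial sums tend to `0`, and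
`|g_{n+2}^{(β)}| ≤ β (β-1) / (n+1)^2` makes the series absolutely summable. Hence
`∑ g^{(β)} = 0`, and `ω^{(β)}` is a combination of `g^{(β)}` and its shift by one. -/

open scoped Matrix

/-- The coefficients `g_k^{(β)}`. -/
noncomputable def gcoef (β : ℝ) : ℕ → ℝ
  | 0 => 1
  | k + 1 => (1 - (β + 1) / ((k : ℝ) + 1)) * gcoef β k

/-- The WSGD coefficients `ω_k^{(β)}`. -/
noncomputable def w (β : ℝ) : ℕ → ℝ
  | 0 => β / 2 * gcoef β 0
  | k + 1 => β / 2 * gcoef β (k + 1) + (2 - β) / 2 * gcoef β k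

open Filter Topology Finset

lemma gcoef_succ (β : ℝ) (n : ℕ) :
    gcoef β (n + 1) = (1 - (β + 1) / ((n : ℝ) + 1)) * gcoef β n := rfl

lemma gcoef_succ_eq_mul_gcoef_sub_one (β : ℝ) (n : ℕ) :
    gcoef β (n + 1) = -β / ((n : ℝ) + 1) * gcoef (β - 1) n := by
  induction n with
  | zero => simp [gcoef]
  | succ n ih =>
    rw [gcoef_succ, ih, gcoef_succ]
    push_cast
    field_simp
    ring

lemma gcoef_succ_eq_sub (β : ℝ) (n : ℕ) :
    gcoef β (n + 1) = gcoef (β - 1) (n + 1) - gcoef (β - 1) n := by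
  rw [gcoef_succ_eq_mul_gcoef_sub_one, gcoef_succ]
  field_simp
  ring

lemma sum_range_gcoef (β : ℝ) (n : ℕ) :
    ∑ k ∈ range (n + 1), gcoef β k = gcoef (β - 1) n := by
  induction n with
  | zero => simp [gcoef]
  | succ n ih => rw [sum_range_succ, ih, gcoef_succ_eq_sub]; ring

lemma abs_gcoef_succ_le {α : ℝ} (hα0 : 0 ≤ α) (hα1 : α ≤ 1) (n : ℕ) :
    |gcoef α (n + 1)| ≤ α / ((n : ℝ) + 1) := by
  induction n with
  | zero => simp [gcoef, abs_of_nonneg hα0]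
  | succ n ih =>
    have hfactor : 1 - (α + 1) / ((n + 1 : ℕ) + 1 : ℝ) = (n + 1 - α) / ((n : ℝ) + 1 + 1) := by
      push_cast
      field_simp
      ring
    rw [gcoef_succ, hfactor, abs_mul, abs_of_nonneg (by bound)]
    calc (n + 1 - α) / ((n : ℝ) + 1 + 1) * |gcoef α (n + 1)|
        ≤ (n + 1 - α) / ((n : ℝ) + 1 + 1) * (α / ((n : ℝ) + 1)) := by gcongr; bound
      _ ≤ ((n : ℝ) + 1) / ((n : ℝ) + 1 + 1) * (α / ((n : ℝ) + 1)) := by gcongr; linarith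
      _ = α / ((n + 1 : ℕ) + 1 : ℝ) := by push_cast; field_simp

lemma tendsto_gcoef_zero {α : ℝ} (hα0 : 0 ≤ α) (hα1 : α ≤ 1) :
    Tendsto (gcoef α) atTop (𝓝 0) := by
  rw [← tendsto_add_atTop_iff_nat 1]
  refine squeeze_zero_norm (abs_gcoef_succ_le hα0 hα1) ?_
  exact tendsto_const_nhds.div_atTop
    (tendsto_atTop_add_const_right _ _ tendsto_natCast_atTop_atTop)

lemma summable_gcoef {β : ℝ} (hβ1 : 1 ≤ β) (hβ2 : β ≤ 2) : Summable (gcoef β) := by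
  rw [← summable_nat_add_iff 2]
  have hbound (n : ℕ) : ‖gcoef β (n + 2)‖ ≤ β * (β - 1) * (1 / ((n : ℝ) + 1) ^ 2) := by
    rw [gcoef_succ_eq_mul_gcoef_sub_one, Real.norm_eq_abs, abs_mul, abs_div, abs_neg,
      abs_of_nonneg (by linarith : (0 : ℝ) ≤ β)]
    calc β / |((n + 1 : ℕ) : ℝ) + 1| * |gcoef (β - 1) (n + 1)|
        ≤ β / ((n : ℝ) + 1) * ((β - 1) / ((n : ℝ) + 1)) := by
          gcongr
          · push_cast; rw [abs_of_pos (by positivity)]; linarith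
          · exact abs_gcoef_succ_le (by linarith) (by linarith) n
      _ = β * (β - 1) * (1 / ((n : ℝ) + 1) ^ 2) := by field_simp
  refine Summable.of_norm_bounded (Summable.mul_left _ ?_) hbound
  exact_mod_cast (summable_nat_add_iff 1).mpr (Real.summable_one_div_nat_pow.mpr one_lt_two)

lemma hasSum_gcoef {β : ℝ} (hβ1 : 1 ≤ β) (hβ2 : β ≤ 2) : HasSum (gcoef β) 0 := by
  rw [(summable_gcoef hβ1 hβ2).hasSum_iff_tendsto_nat, ← tendsto_add_atTop_iff_nat 1]
  simpa only [sum_range_gcoef] using tendsto_gcoef_zero (by linarith) (by linarith)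

theorem wsgd_hasSum_zero (β : ℝ) (hβ1 : 1 < β) (hβ2 : β < 2) :
    HasSum (fun k : ℕ => w β k) 0 := by
  have hg := hasSum_gcoef hβ1.le hβ2.le
  have hg_succ : HasSum (fun k => gcoef β (k + 1)) (-1) := by
    simpa [gcoef] using (hasSum_nat_add_iff' 1).mpr hg
  refine (hasSum_nat_add_iff' 1).mp ?_
  rw [show (0 : ℝ) - ∑ i ∈ range 1, w β i = β / 2 * -1 + (2 - β) / 2 * 0 by simp [w, gcoef]]
  exact (hg_succ.mul_left (β / 2)).add (hg.mul_left ((2 - β) / 2))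
end

section
/- For every integer N ≥ 3, every real β with 1 < β < 2, and all reals e_1, e_2 > 0, the real symmetric matrix H = (K_N + K_N^T)/2 is negative definite; equivalently, all eigenvalues of H are strictly negative. -/
/-!
The symmetric part is `((e₁ + e₂) / 2) • A` with `A = G_β + G_βᵀ`, so it suffices that `A` is
negative definite. `A` is a symmetric Toeplitz matrix whose off-diagonal entries `ω₀ + ω₂` and
`ω_k` (`k ≥ 3`) are nonnegative. Each row sum of `A` is either `ω₁ + ∑_{k<N} ω_k` (first and
last row) or a sum of two partial sums `∑_{k<m} ω_k` with `m ≥ 3`, and all of these are negative: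
`ω₁ < 0`, and `β ∑_{k<n} g_k = -n g_n` with `g_n > 0` for `n ≥ 2`. Finally, a symmetric matrix
with nonnegative off-diagonal entries and negative row sums is negative definite, by the identity
`2 xᵀ A x = 2 ∑ᵢ (∑ⱼ Aᵢⱼ) xᵢ² - ∑ᵢⱼ Aᵢⱼ (xᵢ - xⱼ)²`.
-/
open scoped Matrix

/-- The `(N−1) × (N−1)` lower Hessenberg Toeplitz matrix `G_β`
(1-based entry `(i,j)` equals `ω_{i−j+1}` when `i − j + 1 ≥ 0`, else `0`). -/
noncomputable def Gmat (β : ℝ) (N : ℕ) : Matrix (Fin (N - 1)) (Fin (N - 1)) ℝ :=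
  Matrix.of fun i j => if (j : ℕ) ≤ (i : ℕ) + 1 then w β ((i : ℕ) + 1 - (j : ℕ)) else 0

/-- `K_N = e₁·G_β + e₂·G_βᵀ`. -/
noncomputable def Kmat (β e1 e2 : ℝ) (N : ℕ) : Matrix (Fin (N - 1)) (Fin (N - 1)) ℝ :=
  e1 • Gmat β N + e2 • (Gmat β N)ᵀ

open Finset Matrix

section Coefficients

variable {β : ℝ}

lemma gcoef_one : gcoef β 1 = -β := by
  simp [gcoef]

lemma gcoef_two : gcoef β 2 = β * (β - 1) / 2 := by
  simp only [gcoef]; push_cast; ring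

lemma gcoef_pos (hβ1 : 1 < β) (hβ2 : β < 2) {k : ℕ} (hk : 2 ≤ k) : 0 < gcoef β k := by
  induction k, hk using Nat.le_induction with
  | base => rw [gcoef_two]; nlinarith
  | succ k hk ih =>
    have hk' : (2 : ℝ) ≤ k := by exact_mod_cast hk
    have : (β + 1) / ((k : ℝ) + 1) < 1 := (div_lt_one (by positivity)).2 (by linarith)
    exact mul_pos (by linarith) ih

lemma mul_sum_range_gcoef (n : ℕ) :
    β * ∑ k ∈ range n, gcoef β k = -n * gcoef β n := by
  induction n with
  | zero => simp
  | succ n ih =>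
    rw [sum_range_succ, mul_add, ih, gcoef]
    push_cast
    field_simp
    ring

lemma sum_range_succ_w (n : ℕ) :
    ∑ k ∈ range (n + 1), w β k =
      β / 2 * ∑ k ∈ range (n + 1), gcoef β k + (2 - β) / 2 * ∑ k ∈ range n, gcoef β k := by
  induction n with
  | zero => simp [w]
  | succ n ih =>
    rw [sum_range_succ, ih, sum_range_succ _ (n + 1), sum_range_succ _ n, w]
    ring

lemma sum_range_w_neg (hβ1 : 1 < β) (hβ2 : β < 2) {m : ℕ} (hm : 3 ≤ m) :
    ∑ k ∈ range m, w β k < 0 := by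
  obtain ⟨n, rfl⟩ : ∃ n, m = n + 1 := ⟨m - 1, by omega⟩
  have h1 := mul_sum_range_gcoef (β := β) (n + 1)
  have h2 := mul_sum_range_gcoef (β := β) n
  have hg1 := gcoef_pos hβ1 hβ2 (k := n + 1) (by omega)
  have hg2 := gcoef_pos hβ1 hβ2 (k := n) (by omega)
  have hβ : 0 < β := by linarith
  have key : β * ∑ k ∈ range (n + 1), w β k
      = -(β / 2 * ((n + 1) * gcoef β (n + 1)) + (2 - β) / 2 * (n * gcoef β n)) := by
    rw [sum_range_succ_w]
    push_cast at h1
    linear_combination β / 2 * h1 + (2 - β) / 2 * h2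
  have : 0 < 2 - β := by linarith
  have : β * ∑ k ∈ range (n + 1), w β k < 0 := by
    rw [key, neg_lt_zero]; positivity
  exact neg_of_mul_neg_right this hβ.le

lemma w_one_neg (hβ1 : 1 < β) : w β 1 < 0 := by
  have h : w β 1 = -((β - 1) * (β + 2) / 2) := by
    rw [w, gcoef_one, gcoef]; ring
  rw [h, neg_lt_zero]
  exact div_pos (mul_pos (by linarith) (by linarith)) two_pos

lemma w_zero_add_w_two_pos (hβ1 : 1 < β) : 0 < w β 0 + w β 2 := by
  have h : w β 0 + w β 2 = β * (β - 1) * (β + 2) / 4 := by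
    rw [w, w, gcoef_two, gcoef_one, gcoef]; ring
  rw [h]
  exact div_pos (mul_pos (mul_pos (by linarith) (by linarith)) (by linarith)) four_pos

lemma w_pos (hβ1 : 1 < β) (hβ2 : β < 2) {k : ℕ} (hk : 3 ≤ k) : 0 < w β k := by
  obtain ⟨k, rfl⟩ : ∃ j, k = j + 1 := ⟨k - 1, by omega⟩
  have := gcoef_pos hβ1 hβ2 (k := k + 1) (by omega)
  have := gcoef_pos hβ1 hβ2 (k := k) (by omega)
  have : 0 < 2 - β := by linarith
  rw [w]
  positivity

end Coefficients

section BandSums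

variable {M : Type*} [AddCommMonoid M] (f : ℕ → M)

lemma sum_range_ite_le_sub (m n : ℕ) :
    ∑ j ∈ range n, (if j ≤ m then f (m - j) else 0) =
      ∑ k ∈ Ico (m + 1 - n) (m + 1), f k := by
  rw [← sum_filter]
  refine sum_nbij' (fun j => m - j) (fun k => m - k) ?_ ?_ ?_ ?_ fun _ _ => rfl <;>
    intro a ha <;> simp only [mem_filter, mem_range, mem_Ico] at ha ⊢ <;> omega

lemma sum_range_ite_le_add_one (i n : ℕ) :
    ∑ j ∈ range n, (if i ≤ j + 1 then f (j + 1 - i) else 0) =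
      ∑ k ∈ Ico (1 - i) (n + 1 - i), f k := by
  rw [← sum_filter]
  refine sum_nbij' (fun j => j + 1 - i) (fun k => k + i - 1) ?_ ?_ ?_ ?_ fun _ _ => rfl <;>
    intro a ha <;> simp only [mem_filter, mem_range, mem_Ico] at ha ⊢ <;> omega

end BandSums

section QuadraticForm

variable {ι : Type*} [Fintype ι]

lemma Matrix.IsSymm.two_mul_dotProduct_mulVec {R : Type*} [CommRing R] {A : Matrix ι ι R}
    (hA : A.IsSymm) (x : ι → R) :
    2 * (x ⬝ᵥ A *ᵥ x) =
      2 * ∑ i, (∑ j, A i j) * x i ^ 2 - ∑ i, ∑ j, A i j * (x i - x j) ^ 2 := by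
  have hswap : ∑ i, ∑ j, A i j * x j ^ 2 = ∑ i, (∑ j, A i j) * x i ^ 2 := by
    rw [sum_comm]
    simp_rw [sum_mul, hA.apply]
  have hexpand : ∑ i, ∑ j, A i j * (x i - x j) ^ 2 = ∑ i, (∑ j, A i j) * x i ^ 2
      - 2 * ∑ i, ∑ j, A i j * (x i * x j) + ∑ i, ∑ j, A i j * x j ^ 2 := by
    simp_rw [mul_sum, sum_mul, ← sum_sub_distrib, ← sum_add_distrib]
    refine sum_congr rfl fun i _ => sum_congr rfl fun j _ => by ring
  have hform : x ⬝ᵥ A *ᵥ x = ∑ i, ∑ j, A i j * (x i * x j) := by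
    simp_rw [dotProduct, mulVec, dotProduct, mul_sum]
    exact sum_congr rfl fun i _ => sum_congr rfl fun j _ => by ring
  rw [hexpand, hswap, hform]
  ring

lemma Matrix.posDef_neg_of_nonneg_of_sum_row_neg {A : Matrix ι ι ℝ} (hA : A.IsSymm)
    (hoff : ∀ i j, i ≠ j → 0 ≤ A i j) (hrow : ∀ i, ∑ j, A i j < 0) : (-A).PosDef := by
  rw [posDef_iff_dotProduct_mulVec]
  refine ⟨(isHermitian_iff_isSymm.2 hA).neg, fun x hx => ?_⟩
  have hdiff : 0 ≤ ∑ i, ∑ j, A i j * (x i - x j) ^ 2 := by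
    refine sum_nonneg fun i _ => sum_nonneg fun j _ => ?_
    rcases eq_or_ne i j with rfl | hij
    · simp
    · exact mul_nonneg (hoff i j hij) (sq_nonneg _)
  have hdiag : ∑ i, (∑ j, A i j) * x i ^ 2 < 0 := by
    obtain ⟨i, hi⟩ := Function.ne_iff.1 hx
    refine sum_neg' (fun j _ => mul_nonpos_of_nonpos_of_nonneg (hrow j).le (sq_nonneg _))
      ⟨i, mem_univ i, mul_neg_of_neg_of_pos (hrow i) (sq_pos_of_ne_zero hi)⟩
  rw [star_trivial, neg_mulVec, dotProduct_neg]
  linarith [hA.two_mul_dotProduct_mulVec x]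

lemma Matrix.neg_of_mem_spectrum_of_posDef_neg [DecidableEq ι] {A : Matrix ι ι ℝ}
    (hA : (-A).PosDef) {μ : ℝ} (hμ : μ ∈ spectrum ℝ A) : μ < 0 := by
  rw [← neg_neg A, ← spectrum.neg_eq, Set.mem_neg,
    hA.isHermitian.spectrum_real_eq_range_eigenvalues] at hμ
  obtain ⟨i, hi⟩ := hμ
  linarith [hA.eigenvalues_pos i]

end QuadraticForm

section WSGDMatrix

variable {β : ℝ} {N : ℕ}

lemma Gmat_apply (i j : Fin (N - 1)) :
    Gmat β N i j = if (j : ℕ) ≤ i + 1 then w β (i + 1 - j) else 0 :=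
  rfl

lemma Kmat_add_transpose (e1 e2 : ℝ) :
    Kmat β e1 e2 N + (Kmat β e1 e2 N)ᵀ = (e1 + e2) • (Gmat β N + (Gmat β N)ᵀ) := by
  simp only [Kmat, transpose_add, transpose_smul, transpose_transpose, add_smul, smul_add]
  abel

lemma w_band_add_w_band_nonneg (hβ1 : 1 < β) (hβ2 : β < 2) {a b : ℕ} (hab : a ≠ b) :
    0 ≤ (if b ≤ a + 1 then w β (a + 1 - b) else 0) +
      (if a ≤ b + 1 then w β (b + 1 - a) else 0) := by
  wlog hlt : a < b generalizing a b
  · rw [add_comm]; exact this hab.symm (by omega)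
  rcases (by omega : b = a + 1 ∨ a + 2 ≤ b) with rfl | hb
  · rw [if_pos (by omega), if_pos (by omega), Nat.sub_self, show a + 1 + 1 - a = 2 by omega]
    exact (w_zero_add_w_two_pos hβ1).le
  · rw [if_neg (by omega), if_pos (by omega), zero_add]
    exact (w_pos hβ1 hβ2 (by omega)).le

lemma Gmat_add_transpose_nonneg (hβ1 : 1 < β) (hβ2 : β < 2) {i j : Fin (N - 1)}
    (hij : i ≠ j) :
    0 ≤ (Gmat β N + (Gmat β N)ᵀ) i j :=
  w_band_add_w_band_nonneg hβ1 hβ2 (Fin.val_ne_of_ne hij)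

-- By truncated subtraction the lower bounds vanish except in the last and the first row.
lemma sum_Gmat_add_transpose_row (i : Fin (N - 1)) :
    ∑ j, (Gmat β N + (Gmat β N)ᵀ) i j
      = ∑ k ∈ Ico ((i : ℕ) + 2 - (N - 1)) (i + 2), w β k
        + ∑ k ∈ Ico (1 - (i : ℕ)) (N - i), w β k := by
  simp only [Matrix.add_apply, transpose_apply, Gmat_apply, sum_add_distrib]
  rw [Fin.sum_univ_eq_sum_range (fun j => if j ≤ (i : ℕ) + 1 then w β (i + 1 - j) else 0),
    Fin.sum_univ_eq_sum_range (fun j => if (i : ℕ) ≤ j + 1 then w β (j + 1 - i) else 0),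
    sum_range_ite_le_sub, sum_range_ite_le_add_one, show N - 1 + 1 - i = N - i by omega]

lemma sum_Gmat_add_transpose_row_neg (hβ1 : 1 < β) (hβ2 : β < 2) (hN : 3 ≤ N)
    (i : Fin (N - 1)) :
    ∑ j, (Gmat β N + (Gmat β N)ᵀ) i j < 0 := by
  have hi := i.2
  rw [sum_Gmat_add_transpose_row, sum_Ico_eq_sub _ (by omega), sum_Ico_eq_sub _ (by omega)]
  have hS {m : ℕ} (hm : 3 ≤ m) : ∑ k ∈ range m, w β k < 0 := sum_range_w_neg hβ1 hβ2 hm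
  have hS0 : ∑ k ∈ range 0, w β k = 0 := sum_range_zero _
  have hS1 : ∑ k ∈ range 1, w β k = w β 0 := sum_range_one _
  have hS2 : ∑ k ∈ range 2, w β k = w β 0 + w β 1 := by simp [sum_range_succ]
  have hw1 := w_one_neg hβ1
  rcases (by omega : (i : ℕ) = 0 ∨ (i : ℕ) = N - 2 ∨ 1 ≤ (i : ℕ) ∧ (i : ℕ) + 3 ≤ N)
    with h | h | ⟨h1, h2⟩
  · rw [h, zero_add, show 2 - (N - 1) = 0 by omega, Nat.sub_zero]
    linarith [hS hN]
  · rw [h, show N - 2 + 2 - (N - 1) = 1 by omega, show N - 2 + 2 = N by omega,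
      show 1 - (N - 2) = 0 by omega, show N - (N - 2) = 2 by omega]
    linarith [hS hN]
  · rw [show (i : ℕ) + 2 - (N - 1) = 0 by omega, show 1 - (i : ℕ) = 0 by omega]
    linarith [hS (m := i + 2) (by omega), hS (m := N - i) (by omega)]

end WSGDMatrix

theorem symmetric_part_negative_definite (N : ℕ) (hN : 3 ≤ N)
    (β e1 e2 : ℝ) (hβ1 : 1 < β) (hβ2 : β < 2) (he1 : 0 < e1) (he2 : 0 < e2) :
    (-((2⁻¹ : ℝ) • (Kmat β e1 e2 N + (Kmat β e1 e2 N)ᵀ))).PosDef ∧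
    ∀ μ ∈ spectrum ℝ ((2⁻¹ : ℝ) • (Kmat β e1 e2 N + (Kmat β e1 e2 N)ᵀ)), μ < 0 := by
  have hA : (-(Gmat β N + (Gmat β N)ᵀ)).PosDef :=
    posDef_neg_of_nonneg_of_sum_row_neg (isSymm_add_transpose_self _)
      (fun _ _ => Gmat_add_transpose_nonneg hβ1 hβ2)
      (sum_Gmat_add_transpose_row_neg hβ1 hβ2 hN)
  have hH : (-((2⁻¹ : ℝ) • (Kmat β e1 e2 N + (Kmat β e1 e2 N)ᵀ))).PosDef := by
    rw [Kmat_add_transpose, smul_smul, ← smul_neg]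
    exact hA.smul (by positivity)
  exact ⟨hH, fun μ hμ => neg_of_mem_spectrum_of_posDef_neg hH hμ⟩
end

section
/- For every real β with 1 < β < 2 and every integer N ≥ 4, the Gershgorin radius estimate 2·(ω_0^{(β)} + ω_2^{(β)}) + ∑_{k=3}^{N−2} |ω_k^{(β)} − ω_{N+1−k}^{(β)}| ≤ −2·ω_1^{(β)} holds (the sum being 0 when N = 4). -/
open scoped Matrix

/-!
The `g_k^{(β)}` are the coefficients of `(1 - z)^β`, so their partial sums are the coefficients
of `(1 - z)^(β - 1)`: `∑_{k ≤ n} g_k = ∏_{j ≤ n} (1 - β / j)`, which is `≤ 0` for `n ≥ 1` when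
`1 ≤ β ≤ 2`. The partial sums of the `ω_k` are convex combinations of two such sums, hence also
`≤ 0`, while `g_k ≥ 0` for `k ≥ 2` and so `ω_k ≥ 0` for `k ≥ 3`. Bounding each `|ω_k - ω_{N+1-k}|`
by `ω_k + ω_{N+1-k}` and reflecting the second half of the sum, the left-hand side is at most
`2 (∑_{k ≤ N-2} ω_k - ω_1) ≤ -2 ω_1`.
-/

open Finset

lemma gcoef_succ_eq_neg_mul_sum (β : ℝ) (n : ℕ) :
    gcoef β (n + 1) = -(β / (n + 1)) * ∑ k ∈ range (n + 1), gcoef β k := by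
  induction n with
  | zero => simp [gcoef]
  | succ n ih =>
    rw [sum_range_succ, gcoef, ih]
    push_cast
    field_simp
    ring

lemma sum_range_gcoef_succ (β : ℝ) (n : ℕ) :
    ∑ k ∈ range (n + 2), gcoef β k = (1 - β / (n + 1)) * ∑ k ∈ range (n + 1), gcoef β k := by
  rw [sum_range_succ _ (n + 1), gcoef_succ_eq_neg_mul_sum]
  ring

lemma sum_range_gcoef_nonpos {β : ℝ} (hβ1 : 1 ≤ β) (hβ2 : β ≤ 2) {n : ℕ} (hn : 1 ≤ n) :
    ∑ k ∈ range (n + 1), gcoef β k ≤ 0 := by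
  induction n, hn using Nat.le_induction with
  | base =>
    have h : ∑ k ∈ range 2, gcoef β k = 1 - β := by
      simp only [sum_range_succ, sum_range_zero, gcoef]
      ring
    linarith
  | succ n hn ih =>
    rw [sum_range_gcoef_succ]
    have hfactor : 0 ≤ 1 - β / (n + 1) := by
      rw [sub_nonneg, div_le_one (by positivity)]
      have : (1 : ℝ) ≤ n := by exact_mod_cast hn
      linarith
    exact mul_nonpos_of_nonneg_of_nonpos hfactor ih

lemma gcoef_nonneg {β : ℝ} (hβ1 : 1 ≤ β) (hβ2 : β ≤ 2) {k : ℕ} (hk : 2 ≤ k) :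
    0 ≤ gcoef β k := by
  induction k, hk using Nat.le_induction with
  | base =>
    have h : gcoef β 2 = β * (β - 1) / 2 := by
      simp only [gcoef]
      ring
    rw [h]
    have : 0 ≤ β - 1 := by linarith
    positivity
  | succ k hk ih =>
    rw [gcoef]
    refine mul_nonneg ?_ ih
    rw [sub_nonneg, div_le_one (by positivity)]
    have : (2 : ℝ) ≤ k := by exact_mod_cast hk
    linarith

lemma w_nonneg {β : ℝ} (hβ1 : 1 ≤ β) (hβ2 : β ≤ 2) {k : ℕ} (hk : 3 ≤ k) : 0 ≤ w β k := by
  obtain ⟨j, rfl⟩ : ∃ j, k = j + 1 := ⟨k - 1, by omega⟩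
  rw [w]
  have := gcoef_nonneg hβ1 hβ2 (k := j + 1) (by omega)
  have := gcoef_nonneg hβ1 hβ2 (k := j) (by omega)
  have : 0 ≤ 2 - β := by linarith
  positivity

lemma sum_range_w (β : ℝ) (n : ℕ) :
    ∑ k ∈ range (n + 2), w β k =
      β / 2 * ∑ k ∈ range (n + 2), gcoef β k + (2 - β) / 2 * ∑ k ∈ range (n + 1), gcoef β k := by
  rw [sum_range_succ' (w β), sum_range_succ' (gcoef β) (n + 1)]
  simp only [w, sum_add_distrib, ← mul_sum]
  ring

lemma sum_range_w_nonpos {β : ℝ} (hβ1 : 1 ≤ β) (hβ2 : β ≤ 2) {n : ℕ} (hn : 1 ≤ n) :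
    ∑ k ∈ range (n + 2), w β k ≤ 0 := by
  rw [sum_range_w]
  have := sum_range_gcoef_nonpos hβ1 hβ2 hn
  have := sum_range_gcoef_nonpos hβ1 hβ2 (n := n + 1) (by omega)
  have : 0 ≤ 2 - β := by linarith
  nlinarith

lemma sum_Icc_reflect {M : Type*} [AddCommMonoid M] (f : ℕ → M) (a b : ℕ) :
    ∑ k ∈ Icc a b, f (a + b - k) = ∑ k ∈ Icc a b, f k := by
  refine sum_nbij' (fun k => a + b - k) (fun k => a + b - k) ?_ ?_ ?_ ?_ (fun _ _ => rfl) <;>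
    intro k hk <;> simp only [mem_Icc] at * <;> omega

theorem gershgorin_radius_estimate (β : ℝ) (hβ1 : 1 < β) (hβ2 : β < 2)
    (N : ℕ) (hN : 4 ≤ N) :
    2 * (w β 0 + w β 2) + ∑ k ∈ Finset.Icc 3 (N - 2), |w β k - w β (N + 1 - k)| ≤
      -2 * w β 1 := by
  obtain ⟨n, rfl⟩ : ∃ n, N = n + 4 := ⟨N - 4, by omega⟩
  have hsplit : ∑ k ∈ range (n + 3), w β k = w β 0 + w β 1 + w β 2 + ∑ k ∈ Icc 3 (n + 2), w β k := by
    rw [← Ico_add_one_right_eq_Icc, ← sum_range_add_sum_Ico _ (by omega : 3 ≤ n + 2 + 1)]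
    simp only [sum_range_succ, sum_range_zero, zero_add]
  calc 2 * (w β 0 + w β 2) + ∑ k ∈ Icc 3 (n + 2), |w β k - w β (n + 5 - k)|
      ≤ 2 * (w β 0 + w β 2) + ∑ k ∈ Icc 3 (n + 2), (w β k + w β (n + 5 - k)) := by
        gcongr with k hk
        obtain ⟨hk3, hk⟩ := mem_Icc.1 hk
        have := w_nonneg hβ1.le hβ2.le hk3
        have := w_nonneg hβ1.le hβ2.le (k := n + 5 - k) (by omega)
        exact abs_sub_le_iff.2 ⟨by linarith, by linarith⟩
    _ = 2 * (∑ k ∈ range (n + 3), w β k - w β 1) := by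
        rw [show n + 5 = 3 + (n + 2) by ring, sum_add_distrib, sum_Icc_reflect, hsplit]
        ring
    _ ≤ -2 * w β 1 := by linarith [sum_range_w_nonpos hβ1.le hβ2.le (n := n + 1) (by omega)]
end

section
/- For every integer N ≥ 3, every eigenvalue λ ∈ ℂ of the matrix P_sk (viewed as a complex matrix by mapping its real entries into ℂ) satisfies Re(λ) ≥ h^β·c_0^{(α,σ)} > 0. -/
open scoped Matrix

/-- `c_0^{(α,σ)} = τ^{−α}·σ^{1−α}/Γ(2−α)` with `σ = 1 − α/2`. -/
noncomputable def c0 (α τ : ℝ) : ℝ :=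
  τ ^ (-α) * (1 - α / 2) ^ (1 - α) / Real.Gamma (2 - α)

/-- `A_0 = h^β·c_0^{(α,σ)}·I − σ·K_N` with `σ = 1 − α/2`. -/
noncomputable def A0mat (β α h τ e1 e2 : ℝ) (N : ℕ) :
    Matrix (Fin (N - 1)) (Fin (N - 1)) ℝ :=
  (h ^ β * c0 α τ) • (1 : Matrix (Fin (N - 1)) (Fin (N - 1)) ℝ) -
    (1 - α / 2) • Kmat β e1 e2 N
/-- The skew-circulant matrix `sk(G_β)` with first column
`(ω_1, ω_2, …, ω_{N−2}, −ω_0)ᵀ`. -/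
noncomputable def skG (β : ℝ) (N : ℕ) : Matrix (Fin (N - 1)) (Fin (N - 1)) ℝ :=
  Matrix.of fun i j =>
    if (j : ℕ) ≤ (i : ℕ) then
      (if (i : ℕ) - (j : ℕ) = N - 2 then -(w β 0) else w β ((i : ℕ) - (j : ℕ) + 1))
    else
      -(if N - 1 - ((j : ℕ) - (i : ℕ)) = N - 2 then -(w β 0)
        else w β (N - 1 - ((j : ℕ) - (i : ℕ)) + 1))

/-- `sk(K_N) = e₁·sk(G_β) + e₂·sk(G_β)ᵀ`. -/
noncomputable def skK (β e1 e2 : ℝ) (N : ℕ) : Matrix (Fin (N - 1)) (Fin (N - 1)) ℝ :=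
  e1 • skG β N + e2 • (skG β N)ᵀ

/-- The skew-circulant preconditioner `P_sk = h^β·c_0^{(α,σ)}·I − σ·sk(K_N)`. -/
noncomputable def Psk (β α h τ e1 e2 : ℝ) (N : ℕ) :
    Matrix (Fin (N - 1)) (Fin (N - 1)) ℝ :=
  (h ^ β * c0 α τ) • (1 : Matrix (Fin (N - 1)) (Fin (N - 1)) ℝ) -
    (1 - α / 2) • skK β e1 e2 N


/-!
The WSGD weights have the sign pattern `ω₁ ≤ 0`, `ω₀ + ω₂ ≥ 0`, `ω_k ≥ 0` for `k ≥ 3`, and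
`∑_{k<n} ω_k ≤ 0` for `n ≥ 3`. For a skew-circulant `S` with first column `c`, the matrix `S + Sᵀ`
has diagonal `2 c₀` and off-diagonal absolute row sums `∑_{d=1}^{n-1} |c_d - c_{n-d}|`. For
`S = sk(G_β)` the sign pattern bounds these row sums by `-2 ω₁ = -2 c₀`, so by Gershgorin
`sk(G_β) + sk(G_β)ᵀ` is negative semidefinite. The Hermitian part of the real matrix `P_sk` is
therefore `h^β c₀ I - σ (e₁ + e₂)/2 · (sk(G_β) + sk(G_β)ᵀ) ≥ h^β c₀ I`, and Bendixson's inequality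
`Re λ ≥ λ_min ((P + Pᴴ)/2)` gives the claim.
-/

/-- The `n × n` skew-circulant matrix with first column `(c 0, …, c (n - 1))`. -/
def Matrix.skewCirculant {R : Type*} [Neg R] {n : ℕ} (c : ℕ → R) : Matrix (Fin n) (Fin n) R :=
  Matrix.of fun i j => if j ≤ i then c ↑(i - j) else -c ↑(i - j)

namespace Matrix.skewCirculant

variable {R : Type*} [AddCommGroup R] {n : ℕ} (c : ℕ → R)

lemma apply_self (i : Fin n) : skewCirculant c i i = c 0 := by
  simp [skewCirculant, Fin.coe_sub_iff_le.2 (le_refl i)]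

lemma apply_add_apply_swap_of_lt {i j : Fin n} (hij : j < i) :
    skewCirculant c i j + skewCirculant c j i = c ↑(i - j) - c (n - ↑(i - j)) := by
  have h1 := Fin.coe_sub_iff_le.2 hij.le
  have h2 := Fin.coe_sub_iff_lt.2 hij
  simp only [skewCirculant, of_apply, if_pos hij.le, if_neg (not_le.2 hij), ← sub_eq_add_neg]
  congr 2
  omega

variable [LinearOrder R]

lemma abs_apply_add_apply_swap {i j : Fin n} (hij : i ≠ j) :
    |skewCirculant c i j + skewCirculant c j i| = |c ↑(i - j) - c (n - ↑(i - j))| := by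
  rcases hij.lt_or_gt with hlt | hlt
  · rw [add_comm, apply_add_apply_swap_of_lt c hlt, abs_sub_comm]
    have h1 := Fin.coe_sub_iff_le.2 hlt.le
    have h2 := Fin.coe_sub_iff_lt.2 hlt
    congr 3 <;> omega
  · rw [apply_add_apply_swap_of_lt c hlt]

lemma sum_abs_apply_add_apply_swap [IsOrderedAddMonoid R] [NeZero n] (i : Fin n) :
    ∑ j ∈ Finset.univ.erase i, |skewCirculant c i j + skewCirculant c j i|
      = ∑ d ∈ Finset.Ico 1 n, |c d - c (n - d)| := by
  set f : ℕ → R := fun d => |c d - c (n - d)|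
  calc ∑ j ∈ Finset.univ.erase i, |skewCirculant c i j + skewCirculant c j i|
      = ∑ d ∈ Finset.univ.erase (0 : Fin n), f d := by
        refine Finset.sum_equiv (Equiv.subLeft i) (fun j => ?_) (fun j hj => ?_)
        · simp [sub_eq_zero, eq_comm]
        · exact abs_apply_add_apply_swap c (Finset.ne_of_mem_erase hj).symm
    _ = ∑ d ∈ Finset.Ico 1 n, f d := by
        rw [Finset.sum_erase_eq_sub (Finset.mem_univ _), Fin.sum_univ_eq_sum_range f,
          Finset.sum_range_eq_add_Ico f (Nat.pos_of_neZero n)]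
        simp

end Matrix.skewCirculant

namespace Matrix

open Module.End
open scoped ComplexOrder

variable {n : Type*} [Fintype n] [DecidableEq n]

lemma exists_mulVec_eq_smul_of_mem_spectrum {K : Type*} [Field K] {A : Matrix n n K} {μ : K}
    (hμ : μ ∈ spectrum K A) : ∃ v ≠ 0, A *ᵥ v = μ • v := by
  rw [← spectrum_toLin', ← hasEigenvalue_iff_mem_spectrum] at hμ
  obtain ⟨v, hv⟩ := hμ.exists_hasEigenvector
  exact ⟨v, hv.2, by simpa using hv.apply_eq_smul⟩

variable {𝕜 : Type*} [RCLike 𝕜]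

lemma IsHermitian.posSemidef_of_sum_norm_le {A : Matrix n n 𝕜} (hA : A.IsHermitian)
    (h : ∀ k, ∑ j ∈ Finset.univ.erase k, ‖A k j‖ ≤ RCLike.re (A k k)) : A.PosSemidef := by
  rw [hA.posSemidef_iff_eigenvalues_nonneg]
  intro i
  have hμ : HasEigenvalue (toLin' A) (hA.eigenvalues i : 𝕜) := by
    rw [hasEigenvalue_iff_mem_spectrum, spectrum_toLin', ← RCLike.algebraMap_eq_ofReal]
    exact (spectrum.algebraMap_mem_iff 𝕜).2 (hA.eigenvalues_mem_spectrum_real i)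
  obtain ⟨k, hk⟩ := eigenvalue_mem_ball hμ
  rw [Metric.mem_closedBall, dist_eq_norm, norm_sub_rev] at hk
  have hre : RCLike.re (A k k) - hA.eigenvalues i ≤ ∑ j ∈ Finset.univ.erase k, ‖A k j‖ :=
    calc RCLike.re (A k k) - hA.eigenvalues i = RCLike.re (A k k - (hA.eigenvalues i : 𝕜)) := by
          simp
      _ ≤ _ := (RCLike.re_le_norm _).trans hk
  show 0 ≤ hA.eigenvalues i
  linarith [h k]

lemma le_re_of_mem_spectrum {A : Matrix n n 𝕜} {c : ℝ}
    (hA : (Aᴴ + A - ((2 * c : ℝ) : 𝕜) • 1).PosSemidef) {μ : 𝕜} (hμ : μ ∈ spectrum 𝕜 A) :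
    c ≤ RCLike.re μ := by
  obtain ⟨v, hv0, hv⟩ := exists_mulVec_eq_smul_of_mem_spectrum hμ
  have hpos : 0 < RCLike.re (star v ⬝ᵥ v) :=
    (RCLike.pos_iff.1 (dotProduct_star_self_pos_iff.2 hv0)).1
  have hform : star v ⬝ᵥ (Aᴴ + A - ((2 * c : ℝ) : 𝕜) • 1) *ᵥ v
      = (star μ + μ - ((2 * c : ℝ) : 𝕜)) * (star v ⬝ᵥ v) := by
    simp only [sub_mulVec, add_mulVec, smul_mulVec, one_mulVec, dotProduct_sub, dotProduct_add,
      dotProduct_smul, hv, dotProduct_mulVec, ← star_mulVec]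
    simp [smul_eq_mul]
    ring
  have hnonneg := hA.re_dotProduct_nonneg v
  rw [hform] at hnonneg
  simp only [RCLike.mul_re, map_sub, map_add, RCLike.star_def, RCLike.conj_re, RCLike.conj_im,
    RCLike.ofReal_re, RCLike.ofReal_im] at hnonneg
  nlinarith

end Matrix

namespace WSGD

open scoped ComplexOrder

variable {β : ℝ}

lemma gcoef_nonneg (hβ1 : 1 < β) (hβ2 : β < 2) {k : ℕ} (hk : 2 ≤ k) : 0 ≤ gcoef β k := by
  induction k, hk using Nat.le_induction with
  | base => norm_num [gcoef]; nlinarith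
  | succ k hk ih =>
    have hfac : 0 ≤ 1 - (β + 1) / ((k : ℝ) + 1) := by
      rw [sub_nonneg, div_le_one (by positivity)]
      have : (2 : ℝ) ≤ k := by exact_mod_cast hk
      linarith
    exact mul_nonneg hfac ih

lemma mul_sum_range_gcoef (m : ℕ) : β * ∑ k ∈ Finset.range m, gcoef β k = -m * gcoef β m := by
  induction m with
  | zero => simp
  | succ m ih =>
    rw [Finset.sum_range_succ, mul_add, ih, gcoef]
    field_simp
    push_cast
    ring

lemma sum_range_gcoef_nonpos (hβ1 : 1 < β) (hβ2 : β < 2) {m : ℕ} (hm : 2 ≤ m) :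
    ∑ k ∈ Finset.range m, gcoef β k ≤ 0 := by
  refine nonpos_of_mul_nonpos_right ?_ (by linarith : 0 < β)
  rw [mul_sum_range_gcoef, neg_mul]
  exact neg_nonpos.2 (mul_nonneg m.cast_nonneg (gcoef_nonneg hβ1 hβ2 hm))

lemma sum_range_succ_w (m : ℕ) :
    ∑ k ∈ Finset.range (m + 1), w β k
      = β / 2 * ∑ k ∈ Finset.range (m + 1), gcoef β k
        + (2 - β) / 2 * ∑ k ∈ Finset.range m, gcoef β k := by
  induction m with
  | zero => simp [w]
  | succ m ih =>
    rw [Finset.sum_range_succ, ih, Finset.sum_range_succ _ (m + 1), Finset.sum_range_succ _ m, w]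
    ring

lemma sum_range_w_nonpos (hβ1 : 1 < β) (hβ2 : β < 2) {m : ℕ} (hm : 3 ≤ m) :
    ∑ k ∈ Finset.range m, w β k ≤ 0 := by
  obtain ⟨m, rfl⟩ : ∃ m', m = m' + 1 := ⟨m - 1, by omega⟩
  rw [sum_range_succ_w]
  have h1 := sum_range_gcoef_nonpos hβ1 hβ2 (m := m + 1) (by omega)
  have h2 := sum_range_gcoef_nonpos hβ1 hβ2 (m := m) (by omega)
  have : 0 ≤ β / 2 := by linarith
  have : 0 ≤ (2 - β) / 2 := by linarith
  nlinarith

lemma w_one_nonpos (hβ1 : 1 < β) : w β 1 ≤ 0 := by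
  norm_num [w, gcoef]
  nlinarith

lemma w_nonneg (hβ1 : 1 < β) (hβ2 : β < 2) {k : ℕ} (hk : 3 ≤ k) : 0 ≤ w β k := by
  obtain ⟨k, rfl⟩ : ∃ k', k = k' + 1 := ⟨k - 1, by omega⟩
  have h1 := gcoef_nonneg hβ1 hβ2 (k := k + 1) (by omega)
  have h2 := gcoef_nonneg hβ1 hβ2 (k := k) (by omega)
  rw [w]
  have : 0 ≤ β / 2 := by linarith
  have : 0 ≤ (2 - β) / 2 := by linarith
  positivity

lemma w_zero_add_w_two_nonneg (hβ1 : 1 < β) : 0 ≤ w β 0 + w β 2 := by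
  norm_num [w, gcoef]
  nlinarith [mul_nonneg (mul_nonneg (by linarith : (0:ℝ) ≤ β) (by linarith : (0:ℝ) ≤ β - 1))
    (by linarith : (0:ℝ) ≤ β + 2)]

/-- The first column `(ω₁, ω₂, …, ω_{n-1}, -ω₀)` of `sk(G_β)` of size `n`. -/
noncomputable def skCol (β : ℝ) (n : ℕ) (m : ℕ) : ℝ :=
  if m = n - 1 then -w β 0 else w β (m + 1)

lemma skG_eq_skewCirculant (N : ℕ) : skG β N = Matrix.skewCirculant (skCol β (N - 1)) := by
  ext i j
  have hi := i.isLt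
  have hj := j.isLt
  by_cases hji : j ≤ i
  · simp [skG, Matrix.skewCirculant, skCol, hji, Fin.coe_sub_iff_le.2 hji,
      show N - 1 - 1 = N - 2 by omega]
  · have hsub := Fin.coe_sub_iff_lt.2 (not_le.1 hji)
    simp only [skG, Matrix.skewCirculant, skCol, Matrix.of_apply, if_neg hji, hsub,
      if_neg (show ¬(j : ℕ) ≤ i from hji),
      show N - 1 - 1 = N - 2 by omega, show N - 1 - (↑j - ↑i) = N - 1 + ↑i - ↑j by omega]

lemma abs_skCol_sub_le (hβ1 : 1 < β) (hβ2 : β < 2) {n d : ℕ} (hd : 2 ≤ d) (hdn : d + 2 ≤ n) :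
    |skCol β n d - skCol β n (n - d)| ≤ w β (d + 1) + w β (n - d + 1) := by
  rw [skCol, skCol, if_neg (by omega), if_neg (by omega)]
  have h1 := w_nonneg hβ1 hβ2 (k := d + 1) (by omega)
  have h2 := w_nonneg hβ1 hβ2 (k := n - d + 1) (by omega)
  exact abs_sub_le_of_nonneg_of_le h1 (by linarith) h2 (by linarith)

lemma sum_abs_skCol_sub_le (hβ1 : 1 < β) (hβ2 : β < 2) {n : ℕ} (hn : 2 ≤ n) :
    ∑ d ∈ Finset.Ico 1 n, |skCol β n d - skCol β n (n - d)| ≤ -(2 * skCol β n 0) := by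
  obtain rfl | ⟨m, rfl⟩ : n = 2 ∨ ∃ m, n = m + 3 :=
    (Nat.lt_or_ge n 3).imp (by omega) fun h => ⟨n - 3, by omega⟩
  · have := w_one_nonpos hβ1
    simp [skCol]
    linarith
  set c := skCol β (m + 3)
  have hc0 : c 0 = w β 1 := by simp [c, skCol]
  have hc1 : c 1 = w β 2 := by simp [c, skCol]
  have hclast : c (m + 2) = -w β 0 := by simp [c, skCol]
  have hmid : ∀ k ∈ Finset.range m,
      |c (1 + (k + 1)) - c (m + 3 - (1 + (k + 1)))| ≤ w β (k + 3) + w β (m + 2 - k) := by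
    intro k hk
    rw [Finset.mem_range] at hk
    have := abs_skCol_sub_le hβ1 hβ2 (n := m + 3) (d := 1 + (k + 1)) (by omega) (by omega)
    rwa [show 1 + (k + 1) + 1 = k + 3 by omega,
      show m + 3 - (1 + (k + 1)) + 1 = m + 2 - k by omega] at this
  have hreflect : ∑ k ∈ Finset.range m, w β (m + 2 - k) = ∑ k ∈ Finset.range m, w β (k + 3) := by
    rw [← Finset.sum_range_reflect (fun k => w β (k + 3)) m]
    exact Finset.sum_congr rfl fun k hk => by
      rw [Finset.mem_range] at hk; congr 1; omega
  have htotal := sum_range_w_nonpos hβ1 hβ2 (m := 3 + m) (by omega)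
  rw [Finset.sum_range_add] at htotal
  simp only [Finset.sum_range_succ, Finset.sum_range_zero, add_comm 3] at htotal
  have hmid_sum := Finset.sum_le_sum hmid
  rw [Finset.sum_add_distrib, hreflect] at hmid_sum
  rw [Finset.sum_Ico_eq_sum_range, show m + 3 - 1 = m + 1 + 1 by omega, Finset.sum_range_succ,
    Finset.sum_range_succ', show m + 3 - (1 + 0) = m + 2 by omega,
    show m + 3 - (1 + (m + 1)) = 1 by omega, show 1 + (m + 1) = m + 2 by omega,
    hc0, hc1, hclast, show w β 2 - -w β 0 = w β 0 + w β 2 by ring, abs_sub_comm, abs_sub_comm,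
    show -w β 0 - w β 2 = -(w β 0 + w β 2) by ring, abs_neg,
    abs_of_nonneg (w_zero_add_w_two_nonneg hβ1)]
  linarith

lemma sum_abs_skG_add_swap_le (hβ1 : 1 < β) (hβ2 : β < 2) {N : ℕ} (hN : 3 ≤ N)
    (i : Fin (N - 1)) :
    ∑ j ∈ Finset.univ.erase i, |skG β N i j + skG β N j i| ≤ -(skG β N i i + skG β N i i) := by
  have : NeZero (N - 1) := ⟨by omega⟩
  rw [skG_eq_skewCirculant, Matrix.skewCirculant.sum_abs_apply_add_apply_swap,
    Matrix.skewCirculant.apply_self]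
  linarith [sum_abs_skCol_sub_le hβ1 hβ2 (n := N - 1) (by omega)]

lemma posSemidef_Psk_conjTranspose_add_sub (hβ1 : 1 < β) (hβ2 : β < 2) {α h τ e1 e2 : ℝ}
    (hα1 : α < 1) (he1 : 0 < e1) (he2 : 0 < e2) {N : ℕ} (hN : 3 ≤ N) :
    (((Psk β α h τ e1 e2 N).map (Complex.ofReal : ℝ → ℂ))ᴴ
      + (Psk β α h τ e1 e2 N).map (Complex.ofReal : ℝ → ℂ)
      - ((2 * (h ^ β * c0 α τ) : ℝ) : ℂ) • 1).PosSemidef := by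
  set r := (1 - α / 2) * (e1 + e2)
  have hr : 0 < r := mul_pos (by linarith) (by linarith)
  have hsym : ((Psk β α h τ e1 e2 N).map (Complex.ofReal : ℝ → ℂ))ᴴ
      + (Psk β α h τ e1 e2 N).map (Complex.ofReal : ℝ → ℂ)
      - ((2 * (h ^ β * c0 α τ) : ℝ) : ℂ) • 1
      = Matrix.of fun i j => ((-r * (skG β N i j + skG β N j i) : ℝ) : ℂ) := by
    ext i j
    by_cases hij : i = j
    · subst hij
      simp [r, Psk, skK]
      ring
    · simp [r, Psk, skK, hij, Matrix.one_apply_ne' hij]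
      ring
  rw [hsym]
  refine Matrix.IsHermitian.posSemidef_of_sum_norm_le ?_ fun k => ?_
  · exact Matrix.IsHermitian.ext fun i j => by simp [add_comm]
  · simp only [Matrix.of_apply, Complex.norm_real, Real.norm_eq_abs, abs_mul, abs_neg,
      abs_of_pos hr, ← Finset.mul_sum, RCLike.re_to_complex, Complex.ofReal_re]
    nlinarith [sum_abs_skG_add_swap_le hβ1 hβ2 hN k]

end WSGD

theorem Psk_eigenvalues_re_ge_general (N : ℕ) (hN : 3 ≤ N)
    (β α h τ e1 e2 : ℝ) (hβ1 : 1 < β) (hβ2 : β < 2)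
    (hα1 : α < 1) (hh : 0 < h) (hτ : 0 < τ)
    (he1 : 0 < e1) (he2 : 0 < e2) :
    0 < h ^ β * c0 α τ ∧
    ∀ μ ∈ spectrum ℂ ((Psk β α h τ e1 e2 N).map (Complex.ofReal : ℝ → ℂ)),
      h ^ β * c0 α τ ≤ μ.re := by
  refine ⟨?_, fun μ hμ => ?_⟩
  · have : 0 < 1 - α / 2 := by linarith
    have : 0 < 2 - α := by linarith
    unfold c0
    positivity
  · simpa using Matrix.le_re_of_mem_spectrum
      (WSGD.posSemidef_Psk_conjTranspose_add_sub hβ1 hβ2 hα1 he1 he2 hN) hμ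

theorem Psk_eigenvalues_re_ge (N : ℕ) (hN : 3 ≤ N)
    (β α h τ e1 e2 : ℝ) (hβ1 : 1 < β) (hβ2 : β < 2)
    (hα0 : 0 < α) (hα1 : α < 1) (hh : 0 < h) (hτ : 0 < τ)
    (he1 : 0 < e1) (he2 : 0 < e2) :
    0 < h ^ β * c0 α τ ∧
    ∀ μ ∈ spectrum ℂ ((Psk β α h τ e1 e2 N).map (Complex.ofReal : ℝ → ℂ)),
      h ^ β * c0 α τ ≤ μ.re :=
  Psk_eigenvalues_re_ge_general N hN β α h τ e1 e2 hβ1 hβ2 hα1 hh hτ he1 he2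
end
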